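/- arXiv:2208.12982 — 2 statements merged into one kernel-verified Lean document; each statement's English description precedes it below -/
import Mathlib

section
/- Let 𝐆 = (G,T) be a projective pile and let K be the closed normal subgroup of G generated by ⋃_{t ∈ T} G_t. Then the quotient group G/K is a projective profinite group. -/
open Pointwise

/-- A pile `(G,T)`: a profinite group `G`, a profinite space `T`, and a continuous action
of `G` on `T`. -/
structure Pile : Type 1 where
  G : Type
  T : Type
  [grp : Group G]
  [topG : TopologicalSpace G]
  [tgG : IsTopologicalGroup G]
  [cG : CompactSpace G]
  [h2G : T2Space G]
  [tdG : TotallyDisconnectedSpace G]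
  [topT : TopologicalSpace T]
  [cT : CompactSpace T]
  [h2T : T2Space T]
  [tdT : TotallyDisconnectedSpace T]
  [act : MulAction G T]
  [csmul : ContinuousSMul G T]

attribute [instance] Pile.grp Pile.topG Pile.tgG Pile.cG Pile.h2G Pile.tdG
  Pile.topT Pile.cT Pile.h2T Pile.tdT Pile.act Pile.csmul

/-- A pile is finite if both its group and its space are finite. -/
def Pile.IsFinite (P : Pile) : Prop := Finite P.G ∧ Finite P.T

/-- A morphism of piles: a continuous group homomorphism together with a continuous
equivariant map of the spaces. -/
structure PileHom (P Q : Pile) where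
  toGrp : P.G →* Q.G
  contGrp : Continuous toGrp
  toSp : P.T → Q.T
  contSp : Continuous toSp
  equivariant : ∀ (g : P.G) (t : P.T), toSp (g • t) = toGrp g • toSp t

/-- Composition of pile morphisms. -/
def PileHom.comp {P Q R : Pile} (g : PileHom Q R) (f : PileHom P Q) : PileHom P R where
  toGrp := g.toGrp.comp f.toGrp
  contGrp := g.contGrp.comp f.contGrp
  toSp := g.toSp ∘ f.toSp
  contSp := g.contSp.comp f.contSp
  equivariant := fun a t => by
    simp [Function.comp, f.equivariant, g.equivariant]

/-- A pile morphism is an epimorphism if it is surjective on groups and spaces and for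
every point `x` of the target space there is a point `y` above it whose stabilizer maps
onto the stabilizer of `x`. -/
def PileHom.IsEpi {P Q : Pile} (f : PileHom P Q) : Prop :=
  Function.Surjective f.toGrp ∧ Function.Surjective f.toSp ∧
  ∀ x : Q.T, ∃ y : P.T, f.toSp y = x ∧
    (MulAction.stabilizer P.G y).map f.toGrp = MulAction.stabilizer Q.G x

/-- The induced map of orbit spaces. -/
def PileHom.orbitMap {P Q : Pile} (f : PileHom P Q) :
    Quotient (MulAction.orbitRel P.G P.T) → Quotient (MulAction.orbitRel Q.G Q.T) :=
  Quotient.lift (fun t => Quotient.mk (MulAction.orbitRel Q.G Q.T) (f.toSp t))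
    (fun t₁ t₂ h => Quotient.sound (by
      obtain ⟨g, hg⟩ := MulAction.mem_orbit_iff.mp h
      exact MulAction.mem_orbit_iff.mpr ⟨f.toGrp g, by rw [← hg, f.equivariant]⟩))

/-- A pile morphism is a rigid epimorphism if it is an epimorphism, maps each point
stabilizer isomorphically onto the stabilizer of the image point, and induces a
homeomorphism of the orbit spaces. -/
def PileHom.IsRigid {P Q : Pile} (f : PileHom P Q) : Prop :=
  f.IsEpi ∧
  (∀ y : P.T, Set.InjOn f.toGrp (MulAction.stabilizer P.G y) ∧
    (MulAction.stabilizer P.G y).map f.toGrp = MulAction.stabilizer Q.G (f.toSp y)) ∧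
  IsHomeomorph f.orbitMap

/-- A pile is projective if every finite embedding problem for it (a morphism `φ : 𝐆 → 𝐀`
together with a rigid epimorphism `α : 𝐁 → 𝐀` with `𝐁` a finite pile) has a solution. -/
def Pile.IsProjective (P : Pile) : Prop :=
  ∀ (A B : Pile), B.IsFinite →
    ∀ (φ : PileHom P A) (α : PileHom B A), α.IsRigid →
      ∃ γ : PileHom P B, α.comp γ = φ

/-- A profinite (topological) group `P` is projective: every finite embedding problem for
`P` has a solution; a homomorphism to a finite (discrete) group is continuous iff its
kernel is open. -/
def IsProjectiveProfinite (P : Type*) [Group P] [TopologicalSpace P] : Prop :=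
  ∀ (A B : Type) [Group A] [Group B], Finite A → Finite B →
    ∀ (φ : P →* A) (α : B →* A), IsOpen ((φ.ker : Subgroup P) : Set P) →
      Function.Surjective α →
      ∃ γ : P →* B, IsOpen ((γ.ker : Subgroup P) : Set P) ∧ α.comp γ = φ


theorem pile_exists_section (P : Pile) (N : Subgroup P.G) (hN : N.Normal)
    (hNopen : IsOpen (N : Set P.G))
    (hstab : ∀ t : P.T, MulAction.stabilizer P.G t ≤ N) :
    ∃ S : Set P.T, IsOpen S ∧
      (∀ n ∈ N, ∀ t ∈ S, n • t ∈ S) ∧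
      (∀ t : P.T, ∃ g : P.G, g • t ∈ S) ∧
      (∀ (t : P.T) (g₁ g₂ : P.G), g₁ • t ∈ S → g₂ • t ∈ S → g₂ * g₁⁻¹ ∈ N) := by
  classical
  have hNcl : IsClosed (N : Set P.G) := N.isClosed_of_isOpen hNopen
  -- Step 1: small clopen invariant neighborhoods
  have step1 : ∀ x : P.T, ∃ U : Set P.T, IsClopen U ∧ x ∈ U ∧
      (∀ n ∈ N, ∀ t ∈ U, n • t ∈ U) ∧
      (∀ g ∉ N, ∀ t ∈ U, g • t ∉ U) := by
    intro x
    set C : Set P.T := (fun g : P.G => g • x) '' (↑N)ᶜ with hC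
    have hCcl : IsClosed C :=
      ((hNopen.isClosed_compl.isCompact).image (continuous_id.smul continuous_const)).isClosed
    have hxC : x ∈ Cᶜ := by
      rintro ⟨g, hg, hgx⟩
      exact hg (hstab x (MulAction.mem_stabilizer_iff.mpr hgx))
    obtain ⟨V, hV, hxV, hVC⟩ := compact_exists_isClopen_in_isOpen hCcl.isOpen_compl hxC
    set E : Set (P.G × P.T) := {p | p.1 ∈ ((N : Set P.G))ᶜ ∧ p.1 • p.2 ∈ V} with hE
    have hEopen : IsOpen E :=
      (hNcl.isOpen_compl.preimage continuous_fst).inter (hV.2.preimage continuous_smul)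
    have hEcl : IsClosed E :=
      (hNopen.isClosed_compl.preimage continuous_fst).inter (hV.1.preimage continuous_smul)
    set Pr : Set P.T := Prod.snd '' E with hPr
    have hPrO : IsOpen Pr := isOpenMap_snd E hEopen
    have hPrC : IsClosed Pr := (hEcl.isCompact.image continuous_snd).isClosed
    set W : Set P.T := V \ Pr with hW
    have hWcl : IsClopen W := ⟨hV.1.sdiff hPrO, hV.2.sdiff hPrC⟩
    have hxW : x ∈ W := by
      refine ⟨hxV, ?_⟩
      rintro ⟨⟨g, y⟩, ⟨hgN, hgy⟩, hyx⟩
      simp only at hyx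
      subst hyx
      exact hVC hgy ⟨g, hgN, rfl⟩
    have hWsmall : ∀ g ∉ N, ∀ t ∈ W, g • t ∉ V := by
      intro g hg t ht hgt
      exact ht.2 ⟨(g, t), ⟨hg, hgt⟩, rfl⟩
    refine ⟨(N : Set P.G) • W, ⟨(hNcl.isCompact.smul_set hWcl.1.isCompact).isClosed,
      hWcl.2.smul_left⟩, ?_, ?_, ?_⟩
    · exact Set.mem_smul.mpr ⟨1, N.one_mem, x, hxW, one_smul _ _⟩
    · rintro n hn t ⟨m, hm, w, hw, rfl⟩
      exact Set.mem_smul.mpr ⟨n * m, N.mul_mem hn hm, w, hw, by rw [mul_smul]⟩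
    · rintro g hg t ⟨m, hm, w, hw, rfl⟩ ⟨m', hm', w', hw', heq⟩
      have hne : m'⁻¹ * (g * m) ∉ N := by
        intro hmem
        exact hg (by
          have : g = m' * (m'⁻¹ * (g * m)) * m⁻¹ := by group
          rw [this]
          exact N.mul_mem (N.mul_mem hm' hmem) (N.inv_mem hm))
      have hww : (m'⁻¹ * (g * m)) • w = w' := by
        have : m' • w' = (g * m) • w := by rw [mul_smul]; exact heq
        calc (m'⁻¹ * (g * m)) • w = m'⁻¹ • ((g * m) • w) := by rw [mul_smul]
        _ = m'⁻¹ • (m' • w') := by rw [this]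
        _ = w' := by rw [← mul_smul, inv_mul_cancel, one_smul]
      exact hWsmall _ hne w hw (hww ▸ hw'.1)
  choose U hUcl hxU hUinv hUsmall using step1
  have hcov : (Set.univ : Set P.T) ⊆ ⋃ x, U x := fun t _ => Set.mem_iUnion.mpr ⟨t, hxU t⟩
  obtain ⟨s, hs⟩ := IsCompact.elim_finite_subcover isCompact_univ U (fun x => (hUcl x).2) hcov
  set L := s.toList with hL
  set m := L.length with hm
  set U' : Fin m → Set P.T := fun i => U (L.get i) with hU'
  have hcov' : ∀ t : P.T, ∃ i : Fin m, t ∈ U' i := by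
    intro t
    have := hs (Set.mem_univ t)
    simp only [Set.mem_iUnion] at this
    obtain ⟨x, hxs, htx⟩ := this
    have hxL : x ∈ L := by rw [hL]; exact Finset.mem_toList.mpr hxs
    obtain ⟨i, hi⟩ := List.mem_iff_get.mp hxL
    exact ⟨i, show t ∈ U (L.get i) by rw [hi]; exact htx⟩
  set Gs : Set P.T → Set P.T := fun V => (Set.univ : Set P.G) • V with hGs
  have hGsCl : ∀ i : Fin m, IsClosed (Gs (U' i)) := fun i =>
    (isCompact_univ.smul_set (hUcl _).1.isCompact).isClosed
  have hGsOf : ∀ (V : Set P.T) (g : P.G) (t : P.T), t ∈ V → g • t ∈ Gs V := by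
    intro V g t ht
    exact Set.mem_smul.mpr ⟨g, Set.mem_univ g, t, ht, rfl⟩
  have hGsShift : ∀ (V : Set P.T) (g : P.G) (t : P.T), g • t ∈ Gs V → t ∈ Gs V := by
    rintro V g t ⟨h, -, u, hu, heq⟩
    have heq' : h • u = g • t := heq
    refine Set.mem_smul.mpr ⟨g⁻¹ * h, Set.mem_univ _, u, hu, ?_⟩
    show (g⁻¹ * h) • u = t
    rw [mul_smul, heq', ← mul_smul, inv_mul_cancel, one_smul]
  refine ⟨⋃ i : Fin m, (U' i \ ⋃ j : {j : Fin m // (j : ℕ) < (i : ℕ)}, Gs (U' j.1)),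
    isOpen_iUnion fun i => (hUcl _).2.sdiff (isClosed_iUnion_of_finite fun j => hGsCl _),
    ?_, ?_, ?_⟩
  · intro n hn t ht
    obtain ⟨i, htU, htG⟩ := Set.mem_iUnion.mp ht
    refine Set.mem_iUnion.mpr ⟨i, hUinv _ n hn t htU, ?_⟩
    intro hmem
    obtain ⟨j, hjm⟩ := Set.mem_iUnion.mp hmem
    exact htG (Set.mem_iUnion.mpr ⟨j, hGsShift _ n t hjm⟩)
  · intro t
    set p : ℕ → Prop := fun k => ∃ i : Fin m, (i : ℕ) = k ∧ ∃ g : P.G, g • t ∈ U' i with hp'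
    have hp : ∃ k, p k := by
      obtain ⟨i, hi⟩ := hcov' t
      exact ⟨i, i, rfl, 1, by simpa [one_smul] using hi⟩
    obtain ⟨i, hik, g, hgt⟩ := Nat.find_spec hp
    refine ⟨g, Set.mem_iUnion.mpr ⟨i, hgt, ?_⟩⟩
    intro hmem
    obtain ⟨⟨j, hj⟩, hjm⟩ := Set.mem_iUnion.mp hmem
    obtain ⟨h, -, u, hu, heq⟩ := hjm
    have hju : (h⁻¹ * g) • t ∈ U' j := by
      have : u = (h⁻¹ * g) • t := by
        rw [mul_smul, ← heq, ← mul_smul, inv_mul_cancel, one_smul]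
      exact this ▸ hu
    exact Nat.find_min hp (hik ▸ hj) ⟨j, rfl, h⁻¹ * g, hju⟩
  · intro t g₁ g₂ h₁ h₂
    obtain ⟨i, h₁U, h₁G⟩ := Set.mem_iUnion.mp h₁
    obtain ⟨j, h₂U, h₂G⟩ := Set.mem_iUnion.mp h₂
    have key : ∀ (a b : P.G), (a • t ∈ U' i) → (b • t) = (b * a⁻¹) • (a • t) := by
      intro a b _
      rw [smul_smul, inv_mul_cancel_right]
    rcases lt_trichotomy (i : ℕ) (j : ℕ) with h | h | h
    · exact absurd (Set.mem_iUnion.mpr ⟨⟨i, h⟩, by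
        rw [key g₁ g₂ h₁U]; exact hGsOf _ _ _ h₁U⟩) h₂G
    · have hij : i = j := Fin.ext h
      subst hij
      by_contra hgN
      exact hUsmall (L.get i) (g₂ * g₁⁻¹) hgN (g₁ • t) h₁U (by
        rw [← key g₁ g₂ h₁U]; exact h₂U)
    · exfalso
      refine h₁G (Set.mem_iUnion.mpr ⟨⟨j, h⟩, ?_⟩)
      have : g₁ • t = (g₁ * g₂⁻¹) • (g₂ • t) := by rw [smul_smul, inv_mul_cancel_right]
      rw [this]; exact hGsOf _ _ _ h₂U

/-- the pile of a finite group acting on itself by translation, with the discrete topology -/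
def discretePile (H : Type) [Group H] [Finite H] : Pile :=
  letI t : TopologicalSpace H := ⊥
  haveI : DiscreteTopology H := ⟨rfl⟩
  { G := H
    T := H
    grp := inferInstance
    topG := t
    tgG := { continuous_mul := continuous_of_discreteTopology
             continuous_inv := continuous_of_discreteTopology }
    cG := inferInstance
    h2G := inferInstance
    tdG := inferInstance
    topT := t
    cT := inferInstance
    h2T := inferInstance
    tdT := inferInstance
    act := Monoid.toMulAction H
    csmul := ⟨continuous_of_discreteTopology⟩ }

lemma aux_free {H : Type} [Group H] (a b : H) (h : a • b = b) : a = 1 := by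
  rw [smul_eq_mul] at h
  exact mul_eq_right.mp h

lemma aux_stab (H : Type) [Group H] (y : H) : MulAction.stabilizer H y = ⊥ := by
  ext g
  simp only [Subgroup.mem_bot, MulAction.mem_stabilizer_iff, smul_eq_mul]
  exact mul_eq_right

lemma aux_orbit (H : Type) [Group H] (x y : Quotient (MulAction.orbitRel H H)) : x = y := by
  refine Quotient.inductionOn₂ x y fun a b => Quotient.sound ?_
  show MulAction.orbitRel H H a b
  rw [MulAction.orbitRel_apply]
  refine MulAction.mem_orbit_iff.mpr ⟨a * b⁻¹, ?_⟩
  rw [smul_eq_mul]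
  group

lemma discretePile_stabilizer (H : Type) [Group H] [Finite H] (y : (discretePile H).T) :
    MulAction.stabilizer (discretePile H).G y = ⊥ :=
  aux_stab H y

lemma discretePile_quot_open (H : Type) [Group H] [Finite H]
    (s : Set (Quotient (MulAction.orbitRel (discretePile H).G (discretePile H).T))) :
    IsOpen s := by
  haveI : DiscreteTopology (discretePile H).T := ⟨rfl⟩
  exact isQuotientMap_quotient_mk'.isOpen_preimage.mp (isOpen_discrete _)

lemma discretePile_orbit_subsingleton (H : Type) [Group H] [Finite H]
    (x y : Quotient (MulAction.orbitRel (discretePile H).G (discretePile H).T)) : x = y :=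
  aux_orbit H x y

/-- the pile morphism induced by a group homomorphism between finite groups -/
def regularHom {H K : Type} [Group H] [Finite H] [Group K] [Finite K] (f : H →* K) :
    PileHom (discretePile H) (discretePile K) where
  toGrp := f
  contGrp := by
    haveI : DiscreteTopology (discretePile H).G := ⟨rfl⟩
    exact continuous_of_discreteTopology
  toSp := f
  contSp := by
    haveI : DiscreteTopology (discretePile H).T := ⟨rfl⟩
    exact continuous_of_discreteTopology
  equivariant := fun g t => map_mul f g t

lemma regularHom_rigid {H K : Type} [Group H] [Finite H] [Group K] [Finite K] (f : H →* K)
    (hf : Function.Surjective f) : (regularHom f).IsRigid := by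
  refine ⟨⟨hf, hf, fun x => ?_⟩, fun y => ⟨?_, ?_⟩, ?_, ?_, ?_⟩
  · obtain ⟨y, hy⟩ := hf x
    refine ⟨y, hy, ?_⟩
    erw [discretePile_stabilizer, discretePile_stabilizer, Subgroup.map_bot]
  · rw [discretePile_stabilizer]
    intro a ha b hb _
    have ha' : a = 1 := by simpa using ha
    have hb' : b = 1 := by simpa using hb
    rw [ha', hb']
  · rw [discretePile_stabilizer, discretePile_stabilizer, Subgroup.map_bot]
  · haveI : DiscreteTopology
        (Quotient (MulAction.orbitRel (discretePile H).G (discretePile H).T)) :=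
      discreteTopology_iff_forall_isOpen.mpr (discretePile_quot_open H)
    exact continuous_of_discreteTopology
  · intro s _
    exact discretePile_quot_open K _
  · constructor
    · intro a b _
      exact discretePile_orbit_subsingleton H a b
    · intro y
      exact ⟨Quotient.mk _ ((1 : H) : (discretePile H).T),
        discretePile_orbit_subsingleton K _ y⟩

/-- Let `(G,T)` be a projective pile and let `K` be the closed normal subgroup of `G`
generated by `⋃_t G_t`. Then the quotient group `G/K` (here realized as a profinite group
`Q` together with a continuous surjective homomorphism `π : G → Q` with kernel `K`) is a
projective profinite group. -/
theorem quotient_by_all_stabilizers_projective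
    (P : Pile) (hP : P.IsProjective)
    (Q : Type*) [Group Q] [TopologicalSpace Q] [IsTopologicalGroup Q]
    [CompactSpace Q] [T2Space Q] [TotallyDisconnectedSpace Q]
    (π : P.G →* Q) (hcont : Continuous π) (hsurj : Function.Surjective π)
    (hker : π.ker =
      (Subgroup.normalClosure (⋃ t : P.T,
        (MulAction.stabilizer P.G t : Set P.G))).topologicalClosure) :
    IsProjectiveProfinite Q := by
  intro A B _ _ hAfin hBfin φ α hφker hαsurj
  classical
  haveI : Finite A := hAfin
  haveI : Finite B := hBfin
  set ψ : P.G →* A := φ.comp π with hψdef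
  set N : Subgroup P.G := ψ.ker with hNdef
  have hNnormal : N.Normal := MonoidHom.normal_ker ψ
  have hNopen : IsOpen (N : Set P.G) := by
    have h : (N : Set P.G) = π ⁻¹' ((φ.ker : Subgroup Q) : Set Q) := rfl
    rw [h]
    exact hφker.preimage hcont
  have hπψ : π.ker ≤ N := by
    intro g hg
    show φ (π g) = 1
    rw [show π g = 1 from hg, map_one]
  have hstabN : ∀ t : P.T, MulAction.stabilizer P.G t ≤ N := by
    intro t g hg
    refine hπψ ?_
    rw [hker]
    exact Subgroup.le_topologicalClosure _
      (Subgroup.subset_normalClosure (Set.mem_iUnion.mpr ⟨t, hg⟩))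
  obtain ⟨S, hSopen, hSinv, hSex, hSuniq⟩ := pile_exists_section P N hNnormal hNopen hstabN
  -- the pullback group
  set B' : Subgroup (B × ↥ψ.range) :=
    { carrier := {x | α x.1 = ↑x.2}
      mul_mem' := by
        rintro x y hx hy
        simp only [Set.mem_setOf_eq] at *
        rw [Prod.fst_mul, Prod.snd_mul, map_mul, hx, hy, Subgroup.coe_mul]
      one_mem' := by
        simp only [Set.mem_setOf_eq, Prod.fst_one, Prod.snd_one, map_one, OneMemClass.coe_one]
      inv_mem' := by
        rintro x hx
        simp only [Set.mem_setOf_eq] at *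
        rw [Prod.fst_inv, Prod.snd_inv, map_inv, hx, InvMemClass.coe_inv] } with hB'def
  -- the section data
  set c : P.T → P.G := fun t => Classical.choose (hSex t) with hcdef
  have hcS : ∀ t, c t • t ∈ S := fun t => Classical.choose_spec (hSex t)
  have keyH : ∀ (t : P.T) (g : P.G), g • t ∈ S →
      ψ.rangeRestrict g = ψ.rangeRestrict (c t) := by
    intro t g hg
    have h1 : c t * g⁻¹ ∈ N := hSuniq t g (c t) hg (hcS t)
    have h2 : ψ (c t) * (ψ g)⁻¹ = 1 := by
      have := (show ψ (c t * g⁻¹) = 1 from h1)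
      rwa [map_mul, map_inv] at this
    apply Subtype.ext
    simp only [MonoidHom.coe_rangeRestrict]
    have := mul_inv_eq_one.mp h2
    exact this.symm
  set f : P.T → ↥ψ.range := fun t => (ψ.rangeRestrict (c t))⁻¹ with hfdef
  have hfequiv : ∀ (g : P.G) (t : P.T), f (g • t) = ψ.rangeRestrict g * f t := by
    intro g t
    have h1 : (c (g • t) * g) • t ∈ S := by rw [mul_smul]; exact hcS (g • t)
    have h3 : ψ.rangeRestrict (c (g • t)) * ψ.rangeRestrict g = ψ.rangeRestrict (c t) := by
      rw [← map_mul]; exact keyH t _ h1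
    show (ψ.rangeRestrict (c (g • t)))⁻¹ = ψ.rangeRestrict g * (ψ.rangeRestrict (c t))⁻¹
    calc (ψ.rangeRestrict (c (g • t)))⁻¹
        = ψ.rangeRestrict g * (ψ.rangeRestrict (c (g • t)) * ψ.rangeRestrict g)⁻¹ := by group
      _ = ψ.rangeRestrict g * (ψ.rangeRestrict (c t))⁻¹ := by rw [h3]
  have hfiber : ∀ g : P.G, f ⁻¹' {ψ.rangeRestrict g} = (fun t => g⁻¹ • t) ⁻¹' S := by
    intro g
    ext t
    simp only [Set.mem_preimage, Set.mem_singleton_iff]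
    constructor
    · intro h
      have hc' : (ψ (c t))⁻¹ = ψ g := by
        have := congrArg (fun x : ↥ψ.range => (x : A)) h
        simpa [hfdef] using this
      have hn : c t * g ∈ N := by
        show ψ (c t * g) = 1
        rw [map_mul, ← hc', mul_inv_cancel]
      have heq : g⁻¹ • t = (c t * g)⁻¹ • (c t • t) := by
        rw [← mul_smul]
        congr 1
        group
      rw [heq]
      exact hSinv _ (N.inv_mem hn) _ (hcS t)
    · intro h
      have := keyH t g⁻¹ h
      show (ψ.rangeRestrict (c t))⁻¹ = ψ.rangeRestrict g
      rw [← this, map_inv, inv_inv]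
  -- the morphism of piles φ_pile
  have hA0fin : Finite ↥ψ.range := inferInstance
  have hB'fin : Finite ↥B' := inferInstance
  set φpile : PileHom P (discretePile ↥ψ.range) :=
    { toGrp := ψ.rangeRestrict
      contGrp := by
        letI : TopologicalSpace ↥ψ.range := ⊥
        haveI : DiscreteTopology ↥ψ.range := ⟨rfl⟩
        have key : Continuous (ψ.rangeRestrict : P.G →* ↥ψ.range) := by
          refine continuous_discrete_rng.mpr fun b => ?_
          obtain ⟨g, rfl⟩ := ψ.rangeRestrict_surjective b
          have h : (⇑ψ.rangeRestrict ⁻¹' {ψ.rangeRestrict g} : Set P.G)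
              = (fun x => g⁻¹ * x) ⁻¹' (N : Set P.G) := by
            ext x
            simp only [Set.mem_preimage, Set.mem_singleton_iff, SetLike.mem_coe]
            constructor
            · intro hx
              have hx' : ψ x = ψ g := by
                have := congrArg (fun y : ↥ψ.range => (y : A)) hx
                simpa using this
              show ψ (g⁻¹ * x) = 1
              rw [map_mul, map_inv, hx', inv_mul_cancel]
            · intro hx
              have hx' : ψ (g⁻¹ * x) = 1 := hx
              apply Subtype.ext
              simp only [MonoidHom.coe_rangeRestrict]
              rw [map_mul, map_inv] at hx'
              exact (inv_mul_eq_one.mp hx').symm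
          rw [h]
          exact hNopen.preimage (continuous_const.mul continuous_id)
        exact key
      toSp := f
      contSp := by
        letI : TopologicalSpace ↥ψ.range := ⊥
        haveI : DiscreteTopology ↥ψ.range := ⟨rfl⟩
        have key : Continuous f := by
          refine continuous_discrete_rng.mpr fun b => ?_
          obtain ⟨g, rfl⟩ := ψ.rangeRestrict_surjective b
          rw [hfiber g]
          exact hSopen.preimage (continuous_const.smul continuous_id)
        exact key
      equivariant := fun g t => hfequiv g t } with hφpile
  -- the rigid epimorphism α_pile
  set αhom : ↥B' →* ↥ψ.range := (MonoidHom.snd B ↥ψ.range).comp B'.subtype with hαhom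
  have hαhomsurj : Function.Surjective αhom := by
    rintro ⟨a, ha⟩
    obtain ⟨b, hb⟩ := hαsurj a
    exact ⟨⟨(b, ⟨a, ha⟩), hb⟩, rfl⟩
  obtain ⟨γ, hγ⟩ := hP (discretePile ↥ψ.range) (discretePile ↥B')
    ⟨hB'fin, hB'fin⟩ φpile (regularHom αhom) (regularHom_rigid αhom hαhomsurj)
  -- extract data
  have hgrp : αhom.comp γ.toGrp = ψ.rangeRestrict := congrArg PileHom.toGrp hγ
  have hδstab : ∀ (t : P.T) (g : P.G), g ∈ MulAction.stabilizer P.G t → γ.toGrp g = 1 := by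
    intro t g hg
    have h1 := γ.equivariant g t
    rw [MulAction.mem_stabilizer_iff.mp hg] at h1
    exact aux_free (γ.toGrp g) (γ.toSp t) h1.symm
  set δ' : P.G →* B := (MonoidHom.fst B ↥ψ.range).comp (B'.subtype.comp γ.toGrp) with hδ'def
  have hkerδopen : IsOpen ((δ'.ker : Subgroup P.G) : Set P.G) := by
    haveI : DiscreteTopology (discretePile ↥B').G := ⟨rfl⟩
    have h : ((δ'.ker : Subgroup P.G) : Set P.G)
        = ⇑γ.toGrp ⁻¹' {y | (B'.subtype y).1 = 1} := rfl
    rw [h]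
    exact (isOpen_discrete _).preimage γ.contGrp
  have hkerle : π.ker ≤ δ'.ker := by
    rw [hker]
    haveI : (γ.toGrp.ker).Normal := MonoidHom.normal_ker _
    have h1 : Subgroup.normalClosure (⋃ t : P.T, (MulAction.stabilizer P.G t : Set P.G))
        ≤ γ.toGrp.ker := by
      refine Subgroup.normalClosure_le_normal ?_
      intro g hg
      obtain ⟨t, hgt⟩ := Set.mem_iUnion.mp hg
      exact hδstab t g hgt
    have h2 := Subgroup.topologicalClosure_minimal _ h1 (by
      haveI : DiscreteTopology (discretePile ↥B').G := ⟨rfl⟩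
      have h : ((γ.toGrp.ker : Subgroup P.G) : Set P.G)
          = ⇑γ.toGrp ⁻¹' {1} := by
        ext x
        simp [MonoidHom.mem_ker]
      rw [h]
      exact (isClosed_discrete _).preimage γ.contGrp)
    refine le_trans h2 ?_
    intro g hg
    have hg1 : γ.toGrp g = 1 := hg
    show (MonoidHom.fst B ↥ψ.range) (B'.subtype (γ.toGrp g)) = 1
    erw [hg1, map_one]
  set γQ : Q →* B := π.liftOfRightInverse (Function.surjInv hsurj)
    (Function.rightInverse_surjInv hsurj) ⟨δ', hkerle⟩ with hγQdef
  have hfact : ∀ g : P.G, γQ (π g) = δ' g := fun g =>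
    π.liftOfRightInverse_comp_apply _ _ ⟨δ', hkerle⟩ g
  refine ⟨γQ, ?_, ?_⟩
  · rw [← isClosed_compl_iff]
    have hcompl : ((γQ.ker : Subgroup Q) : Set Q)ᶜ
        = π '' (((δ'.ker : Subgroup P.G) : Set P.G)ᶜ) := by
      ext q
      simp only [Set.mem_compl_iff, SetLike.mem_coe, MonoidHom.mem_ker, Set.mem_image]
      constructor
      · intro h
        obtain ⟨g, rfl⟩ := hsurj q
        exact ⟨g, by rw [← hfact g]; exact h, rfl⟩
      · rintro ⟨g, hg, rfl⟩
        rw [hfact]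
        exact hg
    rw [hcompl]
    exact ((hkerδopen.isClosed_compl).isCompact.image hcont).isClosed
  · refine MonoidHom.ext ?_
    intro q
    obtain ⟨g, rfl⟩ := hsurj q
    show α (γQ (π g)) = φ (π g)
    rw [hfact]
    have hmemB : ∀ y : ↥B', α ((B'.subtype y).1) = ((B'.subtype y).2 : A) := fun y => y.2
    have h2 : (B'.subtype (γ.toGrp g)).2 = ψ.rangeRestrict g :=
      DFunLike.congr_fun hgrp g
    calc α (δ' g) = α ((B'.subtype (γ.toGrp g)).1) := rfl
      _ = ((B'.subtype (γ.toGrp g)).2 : A) := hmemB (γ.toGrp g)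
      _ = ((ψ.rangeRestrict g : ↥ψ.range) : A) := by rw [h2]
      _ = ψ g := ψ.coe_rangeRestrict g
      _ = φ (π g) := rfl
end

section
/- Let (G,T) be a pile, let L be a profinite group, and let ρ: G → L be a continuous homomorphism whose restriction to G_t is injective for every t ∈ T. For each open normal subgroup U of L let Ñ_U denote the closed subgroup of G generated by ⋃_{t ∈ T} (ρ⁻¹(U) ∩ G_t). Then ⋂_U Ñ_U = {1}, where the intersection is taken over all open normal subgroups U of L. -/
open Pointwise

/-- Let `(G,T)` be a pile, `L` a profinite group, and `ρ : G → L` a continuous homomorphism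
injective on every point stabilizer `G_t`. For each open normal subgroup `U` of `L` let
`Ñ_U` be the closed subgroup of `G` generated by `⋃_t (ρ⁻¹(U) ∩ G_t)`. Then the
intersection of the `Ñ_U` over all open normal subgroups `U` of `L` is `{1}`. -/
theorem iInter_Ntilde_eq_one
    (P : Pile) (L : Type*) [Group L] [TopologicalSpace L] [IsTopologicalGroup L]
    [CompactSpace L] [T2Space L] [TotallyDisconnectedSpace L]
    (ρ : P.G →* L) (hcont : Continuous ρ)
    (hinj : ∀ t : P.T, Set.InjOn ρ (MulAction.stabilizer P.G t : Set P.G)) :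
    (⋂ U ∈ {U : Subgroup L | U.Normal ∧ IsOpen (U : Set L)},
      (((Subgroup.closure (⋃ t : P.T,
          ((U.comap ρ : Subgroup P.G) : Set P.G) ∩
            (MulAction.stabilizer P.G t : Set P.G))).topologicalClosure : Subgroup P.G) :
        Set P.G)) = {1} := by
  have instSep : TotallySeparatedSpace P.G := loc_compact_t2_tot_disc_iff_tot_sep.mp inferInstance
  have instSepL : TotallySeparatedSpace L := loc_compact_t2_tot_disc_iff_tot_sep.mp inferInstance
  -- the union of stabilizers is compact
  set S : Set P.G := ⋃ t : P.T, (MulAction.stabilizer P.G t : Set P.G) with hS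
  have hScompact : IsCompact S := by
    have hset : S = Prod.fst '' {p : P.G × P.T | p.1 • p.2 = p.2} := by
      ext g
      simp only [hS, Set.mem_iUnion, SetLike.mem_coe, MulAction.mem_stabilizer_iff,
        Set.mem_image, Set.mem_setOf_eq, Prod.exists]
      exact ⟨fun ⟨t, ht⟩ => ⟨g, t, ht, rfl⟩, fun ⟨a, t, ht, hag⟩ => ⟨t, hag ▸ ht⟩⟩
    rw [hset]
    exact ((isClosed_eq (continuous_fst.smul continuous_snd) continuous_snd).isCompact).image
      continuous_fst
  -- elements of S in every ρ⁻¹(U) are trivial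
  have hker : ∀ g ∈ S, (∀ U : Subgroup L, U.Normal → IsOpen (U : Set L) → g ∈ U.comap ρ) →
      g = 1 := by
    intro g hgS hgU
    obtain ⟨t, hgt⟩ := Set.mem_iUnion.mp hgS
    have hρg : ρ g = 1 := by
      by_contra hne
      obtain ⟨W, hW, h1W, hgW⟩ := exists_isClopen_of_totally_separated (Ne.symm hne)
      obtain ⟨H, hHW⟩ :=
        IsTopologicalGroup.exist_openNormalSubgroup_sub_clopen_nhds_of_one hW h1W
      exact hgW (hHW (hgU H.toSubgroup H.isNormal' H.isOpen))
    exact hinj t hgt (Subgroup.one_mem _) (by simpa using hρg)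
  apply Set.eq_singleton_iff_unique_mem.mpr
  constructor
  · exact Set.mem_iInter₂.mpr fun U hU => Subgroup.one_mem _
  · intro g hg
    rw [Set.mem_iInter₂] at hg
    by_contra hne
    obtain ⟨W, hW, h1W, hgW⟩ := exists_isClopen_of_totally_separated (Ne.symm hne)
    obtain ⟨H, hHW⟩ :=
      IsTopologicalGroup.exist_openNormalSubgroup_sub_clopen_nhds_of_one hW h1W
    -- compactness: find a finite family
    set ι := {U : Subgroup L // U.Normal ∧ IsOpen (U : Set L)} with hι
    set Z : ι → Set P.G := fun U => ((U.1.comap ρ : Subgroup P.G) : Set P.G) with hZ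
    have hZclosed : ∀ U : ι, IsClosed (Z U) :=
      fun U => (U.1.isClosed_of_isOpen U.2.2).preimage hcont
    have hKcompact : IsCompact (S ∩ (H : Set P.G)ᶜ) :=
      hScompact.inter_right (isClosed_compl_iff.mpr H.isOpen)
    have hempty : (S ∩ (H : Set P.G)ᶜ) ∩ ⋂ U : ι, Z U = ∅ := by
      rw [Set.eq_empty_iff_forall_notMem]
      rintro x ⟨⟨hxS, hxH⟩, hxZ⟩
      rw [Set.mem_iInter] at hxZ
      have : x = 1 := hker x hxS fun U hN hO => hxZ ⟨U, hN, hO⟩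
      exact hxH (this ▸ H.toSubgroup.one_mem)
    obtain ⟨s, hs⟩ := hKcompact.elim_finite_subfamily_closed Z hZclosed hempty
    -- the infimum of the finite family
    set U₀ : Subgroup L := ⨅ i : s, (i : ι).1 with hU₀
    have hU₀normal : U₀.Normal := by
      constructor
      intro n hn a
      rw [hU₀, Subgroup.mem_iInf] at hn ⊢
      exact fun i => (i : ι).2.1.conj_mem n (hn i) a
    have hU₀open : IsOpen (U₀ : Set L) := by
      have : (U₀ : Set L) = ⋂ i : s, ((i : ι).1 : Set L) := by
        rw [hU₀]; simp [Subgroup.coe_iInf]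
      rw [this]
      exact isOpen_iInter_of_finite fun i => (i : ι).2.2
    -- the generating set is contained in H
    have hsub : (⋃ t : P.T,
        ((U₀.comap ρ : Subgroup P.G) : Set P.G) ∩
          (MulAction.stabilizer P.G t : Set P.G)) ⊆ (H : Set P.G) := by
      rintro x hx
      obtain ⟨t, hxU, hxt⟩ := Set.mem_iUnion.mp hx
      by_contra hxH
      have hxZ : x ∈ ⋂ i ∈ s, Z i := by
        rw [Set.mem_iInter₂]
        intro i hi
        have : U₀ ≤ i.1 := iInf_le (fun j : s => (j : ι).1) ⟨i, hi⟩
        exact this hxU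
      exact Set.eq_empty_iff_forall_notMem.mp hs x
        ⟨⟨Set.mem_iUnion.mpr ⟨t, hxt⟩, hxH⟩, hxZ⟩
    have hle : (Subgroup.closure (⋃ t : P.T,
        ((U₀.comap ρ : Subgroup P.G) : Set P.G) ∩
          (MulAction.stabilizer P.G t : Set P.G))).topologicalClosure ≤ H.toSubgroup :=
      Subgroup.topologicalClosure_minimal _ (Subgroup.closure_le _ |>.mpr hsub)
        H.toOpenSubgroup.isClosed
    exact hgW (hHW (hle (hg U₀ ⟨hU₀normal, hU₀open⟩)))
end
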